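/- arXiv:2404.03827 — 3 statements merged into one kernel-verified Lean document; each statement's English description precedes it below -/
import Mathlib

section
/- Special case α = 2: for z ∈ ℝ^M, if z_μ - max_{ν≠μ} z_ν ≥ 1, then Sparsemax(z) = e_μ, where Sparsemax(z) = argmin_{p ∈ Δ^M} ‖p - z‖² is the Euclidean projection of z onto the probability simplex Δ^M. -/
/-!
Expanding the square around `e_μ`, `‖q - z‖² = ‖e_μ - z‖² + ‖q - e_μ‖² + 2⟨e_μ - z, q - e_μ⟩`.
On the simplex the cross term equals `∑_{ν ≠ μ} q_ν (z_μ - z_ν - 1)`, which the margin makes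
nonnegative, so `e_μ` beats every other point of the simplex by at least `‖q - e_μ‖²`.
-/

open scoped BigOperators

/-- squared Euclidean distance on `Fin n → ℝ` -/
def sqDist {n : ℕ} (u v : Fin n → ℝ) : ℝ := ∑ i, (u i - v i) ^ 2

section SqDist

variable {n : ℕ}

lemma sqDist_nonneg (u v : Fin n → ℝ) : 0 ≤ sqDist u v :=
  Finset.sum_nonneg fun _ _ => sq_nonneg _

lemma sqDist_eq_zero_iff {u v : Fin n → ℝ} : sqDist u v = 0 ↔ u = v := by
  rw [sqDist, Finset.sum_eq_zero_iff_of_nonneg fun _ _ => sq_nonneg _]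
  simp [sub_eq_zero, funext_iff]

lemma sqDist_eq_add_add (p q z : Fin n → ℝ) :
    sqDist q z = sqDist p z + sqDist q p + 2 * ∑ i, (p i - z i) * (q i - p i) := by
  simp only [sqDist, Finset.mul_sum, ← Finset.sum_add_distrib]
  exact Finset.sum_congr rfl fun _ _ => by ring

theorem setOf_forall_sqDist_le_eq_singleton {S : Set (Fin n → ℝ)} {p z : Fin n → ℝ}
    (hp : p ∈ S) (hvar : ∀ q ∈ S, 0 ≤ ∑ i, (p i - z i) * (q i - p i)) :
    {x ∈ S | ∀ q ∈ S, sqDist x z ≤ sqDist q z} = {p} := by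
  have key : ∀ q ∈ S, sqDist p z + sqDist q p ≤ sqDist q z := fun q hq => by
    rw [sqDist_eq_add_add p q z]
    linarith [hvar q hq]
  ext x
  simp only [Set.mem_ofPred_eq, Set.mem_singleton_iff]
  constructor
  · rintro ⟨hx, hmin⟩
    exact sqDist_eq_zero_iff.mp <| le_antisymm
      (by linarith [hmin p hp, key x hx]) (sqDist_nonneg x p)
  · rintro rfl
    exact ⟨hp, fun q hq => by linarith [key q hq, sqDist_nonneg q x]⟩

end SqDist

lemma sum_mul_sub_single_of_mem_stdSimplex {ι : Type*} [Fintype ι] [DecidableEq ι]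
    {q : ι → ℝ} (hq : q ∈ stdSimplex ℝ ι) (w : ι → ℝ) (μ : ι) :
    ∑ i, w i * (q i - (Pi.single μ 1 : ι → ℝ) i) = ∑ i, q i * (w i - w μ) := by
  simp [mul_sub, Finset.sum_sub_distrib, ← Finset.sum_mul, hq.2, mul_comm, Pi.single_apply]

theorem stmt8 {M : ℕ} (z : Fin M → ℝ) (μ : Fin M)
    (hmargin : ∀ ν, ν ≠ μ → z μ - z ν ≥ 1) :
    {p ∈ stdSimplex ℝ (Fin M) |
        ∀ q ∈ stdSimplex ℝ (Fin M), sqDist p z ≤ sqDist q z}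
      = {Pi.single μ 1} := by
  refine setOf_forall_sqDist_le_eq_singleton (single_mem_stdSimplex ℝ μ) fun q hq => ?_
  rw [sum_mul_sub_single_of_mem_stdSimplex hq]
  refine Finset.sum_nonneg fun ν _ => mul_nonneg (hq.1 ν) ?_
  rcases eq_or_ne ν μ with rfl | hν
  · simp
  · simp only [Pi.single_eq_of_ne hν, Pi.single_eq_same]
    linarith [hmargin ν hν]
end

section
/- Kernelized representation theorem: Let X ∈ ℝ^{d×M} with M ≤ d whose columns are pairwise orthogonal unit vectors. Then for any β > 0 and any positive column-stochastic matrix P ∈ ℝ^{M×M}, there exist matrices W_Q, W_K ∈ ℝ^{d×d} such that column-wise Softmax(β·(W_K X)ᵀ(W_Q X)) = P. -/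
/-!
Softmax inverts the logarithm on probability vectors, so it suffices to make the score matrix
`(W_K X)ᵀ (W_Q X)` equal to `β⁻¹ log P` entrywise. Since `Xᵀ` is a left inverse of `X`, the
weights `W_K = X Xᵀ` and `W_Q = X C Xᵀ` give the score matrix `Xᵀ X C = C` for any `C`.
-/

open scoped BigOperators
open Matrix

/-- softmax -/
noncomputable def softmax {M : ℕ} (z : Fin M → ℝ) : Fin M → ℝ :=
  fun μ => Real.exp (z μ) / ∑ ν, Real.exp (z ν)

theorem softmax_log {M : ℕ} (p : Fin M → ℝ) (hpos : ∀ i, 0 < p i) (hsum : ∑ i, p i = 1) :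
    softmax (fun i => Real.log (p i)) = p := by
  have hexp : ∀ i, Real.exp (Real.log (p i)) = p i := fun i => Real.exp_log (hpos i)
  funext i
  simp only [softmax, hexp, hsum, div_one]

theorem Matrix.transpose_mul_self_eq_one_of_orthonormal {R d m : Type*} [CommSemiring R]
    [Fintype d] [DecidableEq m] (X : Matrix d m R)
    (h : ∀ i j, ∑ k, X k i * X k j = if i = j then 1 else 0) : Xᵀ * X = 1 := by
  ext i j
  simp only [mul_apply, transpose_apply, one_apply, h]

theorem Matrix.transpose_mul_mul_of_mul_eq_one {R d m : Type*} [CommSemiring R]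
    [Fintype d] [Fintype m] [DecidableEq m] {X : Matrix d m R} {L : Matrix m d R}
    (hL : L * X = 1) (A B : Matrix d m R) :
    (A * L * X)ᵀ * (B * L * X) = Aᵀ * B := by
  simp only [Matrix.mul_assoc, hL, Matrix.mul_one]

theorem stmt13_general {d M : ℕ} (X : Matrix (Fin d) (Fin M) ℝ)
    (horthonormal : ∀ i j : Fin M,
      (∑ k, X k i * X k j) = if i = j then 1 else 0)
    (β : ℝ) (hβ : 0 < β)
    (P : Matrix (Fin M) (Fin M) ℝ)
    (hPpos : ∀ i j, 0 < P i j)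
    (hPcol : ∀ j, (∑ i, P i j) = 1) :
    ∃ WQ WK : Matrix (Fin d) (Fin d) ℝ,
      ∀ j, softmax (fun i => β * ((WK * X)ᵀ * (WQ * X)) i j)
        = fun i => P i j := by
  have hXX : Xᵀ * X = 1 := X.transpose_mul_self_eq_one_of_orthonormal horthonormal
  set C : Matrix (Fin M) (Fin M) ℝ := β⁻¹ • P.map Real.log
  have hscores : (X * Xᵀ * X)ᵀ * (X * C * Xᵀ * X) = C := by
    rw [transpose_mul_mul_of_mul_eq_one hXX, ← Matrix.mul_assoc, hXX, Matrix.one_mul]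
  refine ⟨X * C * Xᵀ, X * Xᵀ, fun j => ?_⟩
  have hlog : ∀ i, β * C i j = Real.log (P i j) := fun i =>
    mul_inv_cancel_left₀ hβ.ne' _
  simp only [hscores, hlog]
  exact softmax_log _ (hPpos · j) (hPcol j)

theorem stmt13 {d M : ℕ} (hMd : M ≤ d) (X : Matrix (Fin d) (Fin M) ℝ)
    (horthonormal : ∀ i j : Fin M,
      (∑ k, X k i * X k j) = if i = j then 1 else 0)
    (β : ℝ) (hβ : 0 < β)
    (P : Matrix (Fin M) (Fin M) ℝ)
    (hPpos : ∀ i j, 0 < P i j)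
    (hPcol : ∀ j, (∑ i, P i j) = 1) :
    ∃ WQ WK : Matrix (Fin d) (Fin d) ℝ,
      ∀ j, softmax (fun i => β * ((WK * X)ᵀ * (WQ * X)) i j)
        = fun i => P i j :=
  stmt13_general X horthonormal β hβ P hPpos hPcol
end

section
/- Gradient descent convergence rate for convex smooth functions: Let f: ℝ^d → ℝ be convex and differentiable with G-Lipschitz gradient (‖∇f(x)-∇f(y)‖ ≤ G‖x-y‖). Fix a step size s with 0 < s ≤ 1/G, and iterate x^{k+1} = x^k - s∇f(x^k). If x* is a minimizer of f, then for all k ≥ 1, f(x^k) - f(x*) ≤ ‖x⁰ - x*‖²/(2sk). -/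
/-!
The Lipschitz gradient gives the quadratic upper bound
`f y ≤ f x + ⟪∇f x, y - x⟫ + G/2 ‖y - x‖²`, so a step of size `s ≤ 1/G` decreases `f` by at
least `s/2 ‖∇f x‖²`. Adding the first-order convexity inequality `f x ≤ f z + ⟪∇f x, x - z⟫`
turns this into `f(xᵏ⁺¹) - f z ≤ (‖xᵏ - z‖² - ‖xᵏ⁺¹ - z‖²) / 2s` for every point `z`.
These bounds telescope, and since `f(xᵏ)` is nonincreasing, `k (f(xᵏ) - f z) ≤ ‖x⁰ - z‖² / 2s`.
-/

open InnerProductSpace AffineMap Set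

section

variable {E : Type*} [NormedAddCommGroup E] [InnerProductSpace ℝ E] [CompleteSpace E]
  {f : E → ℝ} {f' : E → E}

theorem HasGradientAt.hasDerivAt_comp_lineMap {g x y : E} {t : ℝ}
    (h : HasGradientAt f g (lineMap x y t)) :
    HasDerivAt (fun t : ℝ ↦ f (lineMap x y t)) ⟪g, y - x⟫_ℝ t := by
  have := h.hasFDerivAt.comp_hasDerivAt t (hasDerivAt_lineMap (a := x) (b := y))
  rwa [toDual_apply_apply] at this

theorem ConvexOn.add_inner_le_of_hasGradientAt {s : Set E} {g x y : E} (hf : ConvexOn ℝ s f)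
    (hx : x ∈ s) (hy : y ∈ s) (hg : HasGradientAt f g x) :
    f x + ⟪g, y - x⟫_ℝ ≤ f y := by
  have hline := hf.comp_affineMap (lineMap x y)
  have hderiv : HasDerivAt (fun t : ℝ ↦ f (lineMap x y t)) ⟪g, y - x⟫_ℝ 0 :=
    HasGradientAt.hasDerivAt_comp_lineMap (by rwa [lineMap_apply_zero])
  have := hline.le_slope_of_hasDerivAt (by simpa) (by simpa) zero_lt_one hderiv
  simp only [slope_def_field, Function.comp_apply, lineMap_apply_zero, lineMap_apply_one] at this
  linarith

theorem le_add_inner_add_sq_of_lipschitz_gradient {G : ℝ} (hgrad : ∀ x, HasGradientAt f (f' x) x)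
    (hlip : ∀ x y, ‖f' x - f' y‖ ≤ G * ‖x - y‖) (x y : E) :
    f y ≤ f x + ⟪f' x, y - x⟫_ℝ + G / 2 * ‖y - x‖ ^ 2 := by
  -- the gap between `f` and its quadratic model along the segment is antitone
  set φ : ℝ → ℝ := fun t ↦ f (lineMap x y t) - t * ⟪f' x, y - x⟫_ℝ - G / 2 * t ^ 2 * ‖y - x‖ ^ 2
  have hφ : ∀ t, HasDerivAt φ (⟪f' (lineMap x y t) - f' x, y - x⟫_ℝ - G * t * ‖y - x‖ ^ 2) t := by
    intro t
    have := (((hgrad (lineMap x y t)).hasDerivAt_comp_lineMap).sub ((hasDerivAt_id t).mul_const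
      ⟪f' x, y - x⟫_ℝ)).sub (((hasDerivAt_pow 2 t).const_mul (G / 2)).mul_const (‖y - x‖ ^ 2))
    refine this.congr_deriv ?_
    simp only [inner_sub_left]
    ring
  have hanti : AntitoneOn φ (Ici 0) := by
    refine antitoneOn_of_hasDerivWithinAt_nonpos (convex_Ici 0)
      (fun t _ ↦ (hφ t).continuousAt.continuousWithinAt) (fun t _ ↦ (hφ t).hasDerivWithinAt) ?_
    rintro t ht
    rw [interior_Ici] at ht
    have hdist : ‖lineMap x y t - x‖ = t * ‖y - x‖ := by
      rw [← vsub_eq_sub, lineMap_vsub_left, norm_smul, Real.norm_of_nonneg ht.le, vsub_eq_sub]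
    calc ⟪f' (lineMap x y t) - f' x, y - x⟫_ℝ - G * t * ‖y - x‖ ^ 2
        ≤ ‖f' (lineMap x y t) - f' x‖ * ‖y - x‖ - G * t * ‖y - x‖ ^ 2 := by
          gcongr; exact real_inner_le_norm _ _
      _ ≤ G * ‖lineMap x y t - x‖ * ‖y - x‖ - G * t * ‖y - x‖ ^ 2 := by
          gcongr; exact hlip _ _
      _ = 0 := by rw [hdist]; ring
  have := hanti (mem_Ici.2 le_rfl) (mem_Ici.2 zero_le_one) zero_le_one
  simp only [φ, lineMap_apply_zero, lineMap_apply_one] at this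
  linarith

theorem apply_gradient_step_le {G s : ℝ} (hgrad : ∀ x, HasGradientAt f (f' x) x)
    (hlip : ∀ x y, ‖f' x - f' y‖ ≤ G * ‖x - y‖) (hs : 0 ≤ s) (hGs : G * s ≤ 1) (x : E) :
    f (x - s • f' x) ≤ f x - s / 2 * ‖f' x‖ ^ 2 := by
  have h := le_add_inner_add_sq_of_lipschitz_gradient hgrad hlip x (x - s • f' x)
  rw [sub_sub_cancel_left, inner_neg_right, real_inner_smul_right, real_inner_self_eq_norm_sq,
    norm_neg, norm_smul, Real.norm_of_nonneg hs] at h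
  nlinarith [sq_nonneg ‖f' x‖, mul_le_mul_of_nonneg_right hGs (mul_nonneg hs (sq_nonneg ‖f' x‖))]

theorem apply_gradient_step_sub_le {G s : ℝ} (hf : ConvexOn ℝ univ f)
    (hgrad : ∀ x, HasGradientAt f (f' x) x) (hlip : ∀ x y, ‖f' x - f' y‖ ≤ G * ‖x - y‖)
    (hs : 0 < s) (hGs : G * s ≤ 1) (x z : E) :
    f (x - s • f' x) - f z ≤ ‖x - z‖ ^ 2 / (2 * s) - ‖x - s • f' x - z‖ ^ 2 / (2 * s) := by
  have hdecr := apply_gradient_step_le hgrad hlip hs.le hGs x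
  have hconv := hf.add_inner_le_of_hasGradientAt (mem_univ x) (mem_univ z) (hgrad x)
  have hexpand : ‖x - s • f' x - z‖ ^ 2
      = ‖x - z‖ ^ 2 - 2 * s * ⟪f' x, x - z⟫_ℝ + s ^ 2 * ‖f' x‖ ^ 2 := by
    rw [sub_right_comm, norm_sub_sq_real, real_inner_smul_right, norm_smul,
      Real.norm_of_nonneg hs.le, real_inner_comm]
    ring
  have hzx : ⟪f' x, z - x⟫_ℝ = -⟪f' x, x - z⟫_ℝ := by rw [← inner_neg_right, neg_sub]
  rw [← sub_div, hexpand, le_div_iff₀ (by positivity)]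
  nlinarith

end

theorem mul_le_of_antitone_of_le_sub {a b : ℕ → ℝ} (ha : Antitone a) (hb : ∀ k, 0 ≤ b k)
    (hab : ∀ k, a (k + 1) ≤ b k - b (k + 1)) (k : ℕ) : k * a k ≤ b 0 := by
  suffices h : ∀ k : ℕ, k * a k + b k ≤ b 0 by linarith [h k, hb k]
  intro k
  induction k with
  | zero => simp
  | succ k ih =>
    have := mul_le_mul_of_nonneg_left (ha k.le_succ) k.cast_nonneg
    push_cast
    linarith [hab k]

theorem stmt15_general {d : ℕ} (f : EuclideanSpace ℝ (Fin d) → ℝ)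
    (f' : EuclideanSpace ℝ (Fin d) → EuclideanSpace ℝ (Fin d))
    (hconv : ConvexOn ℝ Set.univ f)
    (hgrad : ∀ x, HasGradientAt f (f' x) x)
    (G : ℝ)
    (hlip : ∀ x y, ‖f' x - f' y‖ ≤ G * ‖x - y‖)
    (s : ℝ) (hs0 : 0 < s) (hs : s ≤ 1 / G)
    (x : ℕ → EuclideanSpace ℝ (Fin d))
    (hiter : ∀ k, x (k + 1) = x k - s • f' (x k))
    (xstar : EuclideanSpace ℝ (Fin d)) :
    ∀ k : ℕ, 1 ≤ k →
      f (x k) - f xstar ≤ ‖x 0 - xstar‖ ^ 2 / (2 * s * k) := by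
  intro k hk
  have hG : 0 < G := one_div_pos.mp (hs0.trans_le hs)
  have hGs : G * s ≤ 1 := by rwa [le_div_iff₀ hG, mul_comm] at hs
  have hanti : Antitone fun k ↦ f (x k) - f xstar := antitone_nat_of_succ_le fun k ↦ by
    have := apply_gradient_step_le hgrad hlip hs0.le hGs (x k)
    rw [hiter k]
    linarith [(by positivity : 0 ≤ s / 2 * ‖f' (x k)‖ ^ 2)]
  have hstep : ∀ k, f (x (k + 1)) - f xstar
      ≤ ‖x k - xstar‖ ^ 2 / (2 * s) - ‖x (k + 1) - xstar‖ ^ 2 / (2 * s) := fun k ↦ by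
    simpa only [hiter k] using apply_gradient_step_sub_le hconv hgrad hlip hs0 hGs (x k) xstar
  have hbound := mul_le_of_antitone_of_le_sub hanti (fun k ↦ by positivity) hstep k
  have hk' : (0 : ℝ) < k := by exact_mod_cast hk
  rw [le_div_iff₀ (by positivity)]
  rw [le_div_iff₀ (by positivity)] at hbound
  linarith

theorem stmt15 {d : ℕ} (f : EuclideanSpace ℝ (Fin d) → ℝ)
    (f' : EuclideanSpace ℝ (Fin d) → EuclideanSpace ℝ (Fin d))
    (hconv : ConvexOn ℝ Set.univ f)
    (hgrad : ∀ x, HasGradientAt f (f' x) x)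
    (G : ℝ) (hG : 0 < G)
    (hlip : ∀ x y, ‖f' x - f' y‖ ≤ G * ‖x - y‖)
    (s : ℝ) (hs0 : 0 < s) (hs : s ≤ 1 / G)
    (x : ℕ → EuclideanSpace ℝ (Fin d))
    (hiter : ∀ k, x (k + 1) = x k - s • f' (x k))
    (xstar : EuclideanSpace ℝ (Fin d)) (hmin : ∀ y, f xstar ≤ f y) :
    ∀ k : ℕ, 1 ≤ k →
      f (x k) - f xstar ≤ ‖x 0 - xstar‖ ^ 2 / (2 * s * k) :=
  stmt15_general f f' hconv hgrad G hlip s hs0 hs x hiter xstar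
end
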